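/- arXiv:1806.08519 — 2 statements merged into one kernel-verified Lean document; each statement's English description precedes it below -/
import Mathlib

section
/- The object ℕ (the full subset of ℕ) together with the morphism zero : {0} → ℕ sending 0 to 0 and the successor morphism succ : ℕ → ℕ is a parameterized natural numbers object in Rec: for all objects P, B of Rec and all morphisms f : P → B and g : B → B of Rec there exists a unique morphism h : P × ℕ → B of Rec with h(⟨p,0⟩) = f(p) and h(⟨p, n+1⟩) = g(h(⟨p,n⟩)) for all p ∈ P and n ∈ ℕ. -/
open CategoryTheory

namespace RecPaper

/-- Kleene application `{e}(n)`: apply the partial recursive function with Gödel code `e`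
to the input `n`. -/
def kap (e n : ℕ) : Part ℕ :=
  Nat.Partrec.Code.eval (Denumerable.ofNat Nat.Partrec.Code e) n

/-- The type of objects of the category `Rec`: subsets of `ℕ`. -/
def RecCat : Type := Set ℕ

/-- The underlying subset of `ℕ` of an object of `Rec`. -/
def RecCat.carrier (A : RecCat) : Set ℕ := A

/-- View a subset of `ℕ` as an object of `Rec`. -/
def RecCat.ofSet (A : Set ℕ) : RecCat := A

instance : CoeSort RecCat Type := ⟨fun A => {n : ℕ // n ∈ A.carrier}⟩

/-- A function between subsets of `ℕ` is *tracked* if there is a partial recursive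
function, defined on the whole domain, whose restriction to the domain is the given
function. -/
def Tracked {A B : RecCat} (f : A → B) : Prop :=
  ∃ g : ℕ →. ℕ, Nat.Partrec g ∧ ∀ a : A, g a.val = Part.some (f a).val

/-- The category `Rec` of subsets of `ℕ` and restrictions of partial recursive functions. -/
instance : Category RecCat where
  Hom A B := {f : A → B // Tracked f}
  id A := ⟨fun a => a, (fun n => n : ℕ → ℕ), Nat.Partrec.of_primrec Nat.Primrec.id,
    fun _ => rfl⟩
  comp {A B C} f g := ⟨fun a => g.1 (f.1 a), by
    obtain ⟨u, pu, hu⟩ := f.2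
    obtain ⟨v, pv, hv⟩ := g.2
    refine ⟨fun n => u n >>= v, pv.comp pu, fun a => ?_⟩
    simp only [hu a]
    exact (Part.bind_some _ _).trans (hv (f.1 a))⟩
  id_comp _ := rfl
  comp_id _ := rfl
  assoc _ _ _ := rfl

/-- The underlying function of a morphism of `Rec`. -/
def hfun {A B : RecCat} (f : A ⟶ B) : A → B := f.1

/-- The value of a morphism of `Rec` on an element, as a natural number. -/
def happ {A B : RecCat} (f : A ⟶ B) (a : A) : ℕ := (hfun f a).val


/-- The product set `{⟨a,b⟩ : a ∈ A, b ∈ B}`. -/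
def prodSet (A B : Set ℕ) : Set ℕ := {n | ∃ a ∈ A, ∃ b ∈ B, n = Nat.pair a b}

/-- The object `ℕ` of `Rec`: the full subset of `ℕ`. -/
def natObj : RecCat := RecCat.ofSet Set.univ

/-! The morphism `P × ℕ → B` is `⟨p, n⟩ ↦ gⁿ (f p)`. It is tracked because, given trackers
`u` of `f` and `v` of `g`, the partial recursive function `⟨a, n⟩ ↦ vⁿ (u a)` (iteration in
`Part`) restricts to it; uniqueness is induction on the second coordinate. -/

def zeroHom : RecCat.ofSet {0} ⟶ natObj :=
  ⟨fun _ => ⟨0, trivial⟩, (fun n => n : ℕ → ℕ), Nat.Partrec.of_primrec Nat.Primrec.id,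
    fun a => by rw [show a.val = 0 from a.2]; rfl⟩

def succHom : natObj ⟶ natObj :=
  ⟨fun n => ⟨n.val + 1, trivial⟩, (fun n => n + 1 : ℕ → ℕ),
    Nat.Partrec.of_primrec Nat.Primrec.succ, fun _ => rfl⟩

abbrev prodObj (P : RecCat) : RecCat := RecCat.ofSet (prodSet P.carrier Set.univ)

namespace prodObj

variable {P : RecCat}

lemma pair_mem {a : ℕ} (ha : a ∈ P.carrier) (b : ℕ) : Nat.pair a b ∈ (prodObj P).carrier :=
  ⟨a, ha, b, trivial, rfl⟩

lemma unpair_fst_mem (x : prodObj P) : (Nat.unpair x.val).1 ∈ P.carrier := by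
  obtain ⟨a, ha, b, -, hx⟩ := x.2
  rwa [hx, Nat.unpair_pair]

def fst (x : prodObj P) : P := ⟨(Nat.unpair x.val).1, unpair_fst_mem x⟩

def snd (x : prodObj P) : ℕ := (Nat.unpair x.val).2

lemma val_eq_pair (x : prodObj P) : x.val = Nat.pair (fst x).val (snd x) :=
  (Nat.pair_unpair x.val).symm

end prodObj

open prodObj

lemma partrec_natRec_bind_unpair {u v : ℕ →. ℕ} (hu : Nat.Partrec u) (hv : Nat.Partrec v) :
    Nat.Partrec fun n => Nat.rec (u (Nat.unpair n).1) (fun _ IH => IH.bind v) (Nat.unpair n).2 :=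
  Partrec.nat_iff.1 <| Partrec.nat_rec (h := fun (_ : ℕ) (yi : ℕ × ℕ) => v yi.2)
    (Computable.snd.comp Computable.unpair)
    ((Partrec.nat_iff.2 hu).comp (Computable.fst.comp Computable.unpair))
    ((Partrec.nat_iff.2 hv).comp (Computable.snd.comp Computable.snd)).to₂

lemma natRec_bind_eq_iterate {B : RecCat} {g : B → B} {v : ℕ →. ℕ}
    (hv : ∀ b : B, v b.val = Part.some (g b).val) (b : B) (m : ℕ) :
    (Nat.rec (Part.some b.val) (fun _ IH => IH.bind v) m : Part ℕ) = Part.some (g^[m] b).val := by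
  induction m with
  | zero => rfl
  | succ m ih =>
    rw [Function.iterate_succ_apply', ← hv, ← Part.bind_some _ v, ← ih]

section ParamRec

variable {P B : RecCat}

def IsParamRec (f : P ⟶ B) (g : B ⟶ B) (h : prodObj P ⟶ B) : Prop :=
  (∀ (x : prodObj P) (p : P), x.val = Nat.pair p.val 0 → happ h x = happ f p) ∧
  (∀ x y : prodObj P,
    (Nat.unpair x.val).1 = (Nat.unpair y.val).1 →
    (Nat.unpair x.val).2 = (Nat.unpair y.val).2 + 1 →
    happ h x = happ g (hfun h y))

lemma isParamRec_iff (f : P ⟶ B) (g : B ⟶ B) (h : prodObj P ⟶ B) :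
    IsParamRec f g h ↔ ∀ x, hfun h x = g.1^[snd x] (f.1 (fst x)) := by
  constructor
  · rintro ⟨h_zero, h_succ⟩ x
    suffices ∀ m (x : prodObj P), snd x = m → hfun h x = g.1^[m] (f.1 (fst x)) from this _ x rfl
    intro m
    induction m with
    | zero =>
      intro x hx
      exact Subtype.ext (h_zero x (fst x) (hx ▸ val_eq_pair x))
    | succ m ih =>
      intro x hx
      let y : prodObj P := ⟨Nat.pair (fst x).val m, pair_mem (fst x).2 m⟩
      have hy : fst y = fst x ∧ snd y = m := by simp [y, fst, snd, Nat.unpair_pair]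
      have hxy :=
        h_succ x y (congrArg Subtype.val hy.1.symm) (hx.trans (congrArg (· + 1) hy.2.symm))
      rw [ih y hy.2, hy.1] at hxy
      rw [Function.iterate_succ_apply']
      exact Subtype.ext hxy
  · intro hh
    refine ⟨fun x p hx => ?_, fun x y hfst hsnd => ?_⟩
    · have hp : fst x = p := Subtype.ext (by simp [fst, hx])
      have hm : snd x = 0 := by simp [snd, hx]
      simp only [happ, hh, hp, hm, Function.iterate_zero_apply]
      rfl
    · have hp : fst x = fst y := Subtype.ext hfst
      simp only [happ, hh, hp, show snd x = snd y + 1 from hsnd, Function.iterate_succ_apply']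
      rfl

lemma IsParamRec.unique {f : P ⟶ B} {g : B ⟶ B} {h h' : prodObj P ⟶ B}
    (hh : IsParamRec f g h) (hh' : IsParamRec f g h') : h = h' :=
  Subtype.ext <| funext fun x =>
    ((isParamRec_iff f g h).1 hh x).trans ((isParamRec_iff f g h').1 hh' x).symm

def paramRec (f : P ⟶ B) (g : B ⟶ B) : prodObj P ⟶ B :=
  ⟨fun x => g.1^[snd x] (f.1 (fst x)), by
    obtain ⟨u, hu, hfu⟩ := f.2
    obtain ⟨v, hv, hgv⟩ := g.2
    refine ⟨_, partrec_natRec_bind_unpair hu hv, fun x => ?_⟩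
    show (Nat.rec (u (fst x).val) (fun _ IH => IH.bind v) (snd x) : Part ℕ) = _
    rw [hfu]
    exact natRec_bind_eq_iterate hgv _ _⟩

lemma isParamRec_paramRec (f : P ⟶ B) (g : B ⟶ B) : IsParamRec f g (paramRec f g) :=
  (isParamRec_iff f g _).2 fun _ => rfl

end ParamRec

/-- `ℕ`, together with `zero : {0} → ℕ` and the successor morphism, is a parameterized
natural numbers object in `Rec`. -/
theorem rec_parameterized_nno :
    ∃ zero : RecCat.ofSet {0} ⟶ natObj,
      (∀ x, happ zero x = 0) ∧
      ∃ succ : natObj ⟶ natObj,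
        (∀ n, happ succ n = n.val + 1) ∧
        ∀ (P B : RecCat) (f : P ⟶ B) (g : B ⟶ B),
          ∃! h : RecCat.ofSet (prodSet P.carrier Set.univ) ⟶ B,
            (∀ (x : RecCat.ofSet (prodSet P.carrier Set.univ)) (p : P),
              x.val = Nat.pair p.val 0 → happ h x = happ f p) ∧
            (∀ x y : RecCat.ofSet (prodSet P.carrier Set.univ),
              (Nat.unpair x.val).1 = (Nat.unpair y.val).1 →
              (Nat.unpair x.val).2 = (Nat.unpair y.val).2 + 1 →
              happ h x = happ g (hfun h y)) :=
  ⟨zeroHom, fun _ => rfl, succHom, fun _ => rfl, fun _ _ f g =>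
    ⟨paramRec f g, isParamRec_paramRec f g,
      fun _ hh => IsParamRec.unique hh (isParamRec_paramRec f g)⟩⟩

end RecPaper
end

section
/- The Kleene realizability doctrine over Rec has weak comprehensions: for every A ⊆ ℕ and every realized predicate P on A, the subset Σ(A,P) := {⟨a,n⟩ : a ∈ A, n ∈ P(a)} together with the morphism cmp : Σ(A,P) → A of Rec induced by the first projection p₁ satisfies: ⊤ ⊑_{Σ(A,P)} cmp*P, and for every morphism f : B → A of Rec with ⊤ ⊑_B f*P there exists a (not necessarily unique) morphism f' : B → Σ(A,P) of Rec with cmp ∘ f' = f. -/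
open CategoryTheory

namespace RecPaper

/-- The realizability order `P ⊑_A Q` between realized predicates on `A`. -/
def rle (A : Set ℕ) (P Q : ℕ → Set ℕ) : Prop :=
  ∃ e : ℕ, ∀ a ∈ A, ∀ n ∈ P a, ∃ v ∈ Q a, kap e (Nat.pair a n) = Part.some v

/-- The top realized predicate `⊤(a) = {0}`. -/
def rTop : ℕ → Set ℕ := fun _ => {0}

/-- Reindexing of a realized predicate along a morphism of `Rec`. -/
def fstar {A B : RecCat} (f : A ⟶ B) (Q : ℕ → Set ℕ) : ℕ → Set ℕ :=
  fun a => {n | ∃ h : a ∈ A.carrier, n ∈ Q (happ f ⟨a, h⟩)}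

/-- The comprehension set `Σ(A,P) = {⟨a,n⟩ : a ∈ A, n ∈ P(a)}`. -/
def sigmaSet (A : RecCat) (P : ℕ → Set ℕ) : Set ℕ :=
  {m | ∃ a ∈ A.carrier, ∃ n ∈ P a, m = Nat.pair a n}

/-!
The comprehension map is the first projection `⟨a, n⟩ ↦ a`; the second projection realizes
`⊤ ⊑ cmp*P`, since the witness `n ∈ P a` is stored in the pair itself. Conversely, a realizer
`e` of `⊤ ⊑_B f*P` computes, uniformly in `b`, a witness `{e}(⟨b, 0⟩) ∈ P (f b)`, and
`b ↦ ⟨f b, {e}(⟨b, 0⟩)⟩` is a recursive lift of `f` through the first projection.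
-/

theorem exists_kap_eq {f : ℕ →. ℕ} (hf : Nat.Partrec f) : ∃ e, kap e = f := by
  obtain ⟨c, rfl⟩ := Nat.Partrec.Code.exists_code.mp hf
  exact ⟨Encodable.encode c, funext fun n => by simp only [kap, Denumerable.ofNat_encode]⟩

theorem nat_partrec_kap (e : ℕ) : Nat.Partrec (kap e) :=
  Nat.Partrec.Code.exists_code.mpr ⟨_, rfl⟩

section Comprehension

variable {A B : RecCat} {P : ℕ → Set ℕ}

def TrackedNat (v : B → ℕ) : Prop :=
  ∃ g : ℕ →. ℕ, Nat.Partrec g ∧ ∀ b : B, g b.val = Part.some (v b)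

theorem unpair_fst_mem_of_mem_sigmaSet {m : ℕ} (hm : m ∈ sigmaSet A P) :
    m.unpair.1 ∈ A.carrier := by
  obtain ⟨a, ha, n, -, rfl⟩ := hm
  simpa using ha

variable (A P) in
def sigmaFst : RecCat.ofSet (sigmaSet A P) ⟶ A :=
  ⟨fun x => ⟨x.val.unpair.1, unpair_fst_mem_of_mem_sigmaSet x.2⟩,
    fun n => Part.some n.unpair.1, Nat.Partrec.of_primrec Nat.Primrec.left, fun _ => rfl⟩

theorem happ_sigmaFst (x : RecCat.ofSet (sigmaSet A P)) :
    happ (sigmaFst A P) x = x.val.unpair.1 :=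
  rfl

theorem top_rle_fstar_sigmaFst : rle (sigmaSet A P) rTop (fstar (sigmaFst A P) P) := by
  obtain ⟨e, he⟩ := exists_kap_eq
    (Nat.Partrec.of_primrec (Nat.Primrec.right.comp Nat.Primrec.left))
  refine ⟨e, ?_⟩
  rintro _ ⟨a, ha, n, hn, rfl⟩ _ rfl
  refine ⟨n, ⟨⟨a, ha, n, hn, rfl⟩, by simpa [happ_sigmaFst] using hn⟩, by simp [he]⟩

theorem exists_tracked_witness_of_top_rle_fstar {f : B ⟶ A}
    (h : rle B.carrier rTop (fstar f P)) :
    ∃ v : B → ℕ, (∀ b, v b ∈ P (happ f b)) ∧ TrackedNat v := by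
  obtain ⟨e, he⟩ := h
  choose v hvP hv using fun b : B => he b.val b.2 0 rfl
  refine ⟨v, fun b => (hvP b).2, fun n => kap e (Nat.pair n 0), ?_, hv⟩
  exact ((nat_partrec_kap e).comp
    (Nat.Partrec.of_primrec (Nat.Primrec.pair Nat.Primrec.id (Nat.Primrec.const 0)))).of_eq
    fun n => by simp

def sigmaLift (f : B ⟶ A) (v : B → ℕ) (hv : ∀ b, v b ∈ P (happ f b))
    (hvt : TrackedNat v) :
    B ⟶ RecCat.ofSet (sigmaSet A P) :=
  ⟨fun b => ⟨Nat.pair (happ f b) (v b), happ f b, (hfun f b).2, v b, hv b, rfl⟩, by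
    obtain ⟨u, hu, hfu⟩ := f.2
    obtain ⟨g, hg, hgv⟩ := hvt
    exact ⟨_, hu.pair hg, fun b => by simp [hfu b, hgv b, happ, hfun, Seq.seq]⟩⟩

theorem sigmaLift_comp_sigmaFst (f : B ⟶ A) (v : B → ℕ) (hv : ∀ b, v b ∈ P (happ f b))
    (hvt : TrackedNat v) :
    sigmaLift f v hv hvt ≫ sigmaFst A P = f := by
  refine Subtype.ext (funext fun b => Subtype.ext ?_)
  exact congrArg Prod.fst (Nat.unpair_pair (happ f b) (v b))

end Comprehension

/-- The Kleene realizability doctrine over `Rec` has weak comprehensions: `Σ(A,P)` with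
the first-projection morphism `cmp` satisfies `⊤ ⊑ cmp*P`, and every `f : B ⟶ A` with
`⊤ ⊑_B f*P` factors (not necessarily uniquely) through `cmp`. -/
theorem rec_weak_comprehensions :
    ∀ (A : RecCat) (P : ℕ → Set ℕ),
      ∃ cmp : RecCat.ofSet (sigmaSet A P) ⟶ A,
        (∀ x, happ cmp x = (Nat.unpair x.val).1) ∧
        rle (sigmaSet A P) rTop (fstar cmp P) ∧
        ∀ (B : RecCat) (f : B ⟶ A),
          rle B.carrier rTop (fstar f P) →
          ∃ f' : B ⟶ RecCat.ofSet (sigmaSet A P), f' ≫ cmp = f := by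
  intro A P
  refine ⟨sigmaFst A P, happ_sigmaFst, top_rle_fstar_sigmaFst, fun B f hf => ?_⟩
  obtain ⟨v, hv, hvt⟩ := exists_tracked_witness_of_top_rle_fstar hf
  exact ⟨sigmaLift f v hv hvt, sigmaLift_comp_sigmaFst f v hv hvt⟩

end RecPaper
end
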